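/- arXiv:2402.12562 — 2 statements merged into one kernel-verified Lean document; each statement's English description precedes it below -/
import Mathlib

section
/- Fix integers 1 ≤ t1 ≤ T and parameters η⁺, η⁻ ≥ 0, and suppose the base demand H is bounded on [0,p̄]. Then the optimal revenue V*(·, t1) is non-decreasing in the starting reference price, and for all 0 ≤ r ≤ r′ ≤ p̄ it satisfies the Lipschitz-type bound 0 ≤ V*(r′, t1) − V*(r, t1) ≤ p̄ · t1 · (r′ − r) · (η⁺ + η⁻) · Σ_{t=t1}^{T} (1/t). -/
/-!
For a fixed price sequence, raising the starting reference price from `r` to `r'` raises the ARM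
reference price of round `t` by exactly `t1 (r' - r) / t`, whatever the prices. A single-round
revenue `Π(p, ·)` is non-decreasing in the reference price with slope at most `p (η⁺ + η⁻)`, so
summing over the rounds gives both inequalities for every price sequence. Boundedness of `H` makes
the revenues bounded above, and the inequalities pass to the suprema.
-/

/-- ARM reference price at time `t`, starting from reference price `r` at time `t1`:
`r_t = (t1·r + Σ_{s=t1}^{t−1} p_s)/t`. -/
noncomputable def armRef (t1 : ℕ) (r : ℝ) (p : ℕ → ℝ) (t : ℕ) : ℝ :=
  ((t1 : ℝ) * r + ∑ s ∈ Finset.Ico t1 t, p s) / (t : ℝ)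

/-- Single-round expected revenue `Π(x, r)` with base demand `H` and reference effects. -/
noncomputable def armRev (H : ℝ → ℝ) (ηp ηm : ℝ) (x r : ℝ) : ℝ :=
  x * (H x + ηp * max (r - x) 0 - ηm * max (x - r) 0)

/-- Total ARM revenue `V^p(r, t1)` of price sequence `p` over rounds `t1..T`. -/
noncomputable def armV (H : ℝ → ℝ) (ηp ηm : ℝ) (t1 T : ℕ) (r : ℝ) (p : ℕ → ℝ) : ℝ :=
  ∑ t ∈ Finset.Icc t1 T, armRev H ηp ηm (p t) (armRef t1 r p t)

/-- Optimal ARM revenue `V*(r, t1)`: supremum over all price sequences valued in `[0, p̄]`. -/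
noncomputable def armVStar (H : ℝ → ℝ) (ηp ηm : ℝ) (t1 T : ℕ) (pbar r : ℝ) : ℝ :=
  sSup {x : ℝ | ∃ p : ℕ → ℝ,
    (∀ t ∈ Finset.Icc t1 T, p t ∈ Set.Icc 0 pbar) ∧ x = armV H ηp ηm t1 T r p}

open Finset

theorem csSup_image_le_csSup_image_add {α : Type*} {S : Set α} {f g : α → ℝ} {B : ℝ}
    (hS : S.Nonempty) (hg : BddAbove (g '' S)) (h : ∀ a ∈ S, f a ≤ g a + B) :
    sSup (f '' S) ≤ sSup (g '' S) + B :=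
  csSup_le (hS.image f) fun _ ⟨a, ha, hfa⟩ =>
    hfa ▸ (h a ha).trans (add_le_add_left (le_csSup hg ⟨a, ha, rfl⟩) B)

section Revenue

variable {H : ℝ → ℝ} {ηp ηm : ℝ}

theorem armRev_sub_armRev (x a b : ℝ) :
    armRev H ηp ηm x b - armRev H ηp ηm x a =
      x * (ηp * (max (b - x) 0 - max (a - x) 0) + ηm * (max (x - a) 0 - max (x - b) 0)) := by
  unfold armRev; ring

theorem max_zero_sub_max_zero_mem_Icc {α : Type*} [AddCommGroup α] [LinearOrder α]
    [IsOrderedAddMonoid α] {u v : α} (huv : u ≤ v) :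
    max v 0 - max u 0 ∈ Set.Icc 0 (v - u) :=
  ⟨sub_nonneg.2 (max_le_max_right 0 huv),
    (max_sub_max_le_max v 0 u 0).trans (max_le le_rfl (by simpa using huv))⟩

theorem reference_effect_increment_mem_Icc (hηp : 0 ≤ ηp) (hηm : 0 ≤ ηm) {x a b : ℝ}
    (hab : a ≤ b) :
    ηp * (max (b - x) 0 - max (a - x) 0) + ηm * (max (x - a) 0 - max (x - b) 0) ∈
      Set.Icc 0 ((ηp + ηm) * (b - a)) := by
  obtain ⟨gain_nonneg, gain_le⟩ := max_zero_sub_max_zero_mem_Icc (by linarith : a - x ≤ b - x)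
  obtain ⟨loss_nonneg, loss_le⟩ := max_zero_sub_max_zero_mem_Icc (by linarith : x - b ≤ x - a)
  constructor
  · positivity
  · nlinarith [mul_le_mul_of_nonneg_left gain_le hηp, mul_le_mul_of_nonneg_left loss_le hηm]

theorem armRev_monotone (hηp : 0 ≤ ηp) (hηm : 0 ≤ ηm) {x : ℝ} (hx : 0 ≤ x) :
    Monotone (armRev H ηp ηm x) := by
  intro a b hab
  rw [← sub_nonneg, armRev_sub_armRev]
  exact mul_nonneg hx (reference_effect_increment_mem_Icc hηp hηm hab).1

theorem armRev_sub_armRev_le (hηp : 0 ≤ ηp) (hηm : 0 ≤ ηm) {x a b : ℝ} (hx : 0 ≤ x)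
    (hab : a ≤ b) :
    armRev H ηp ηm x b - armRev H ηp ηm x a ≤ x * ((ηp + ηm) * (b - a)) := by
  rw [armRev_sub_armRev]
  exact mul_le_mul_of_nonneg_left (reference_effect_increment_mem_Icc hηp hηm hab).2 hx

theorem armRev_le (hηp : 0 ≤ ηp) (hηm : 0 ≤ ηm) {x ρ M C : ℝ} (hx : 0 ≤ x) (hxM : x ≤ M)
    (hH : |H x| ≤ C) (hρ : ρ ≤ M) : armRev H ηp ηm x ρ ≤ M * (C + ηp * M) := by
  have gain_le : max (ρ - x) 0 ≤ M := max_le (by linarith) (hx.trans hxM)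
  have inner_le : H x + ηp * max (ρ - x) 0 - ηm * max (x - ρ) 0 ≤ C + ηp * M := by
    nlinarith [le_of_abs_le hH, mul_le_mul_of_nonneg_left gain_le hηp,
      mul_nonneg hηm (le_max_right (x - ρ) 0)]
  have bound_nonneg : 0 ≤ C + ηp * M := by
    nlinarith [(abs_nonneg (H x)).trans hH, mul_nonneg hηp (hx.trans hxM)]
  calc armRev H ηp ηm x ρ ≤ x * (C + ηp * M) := mul_le_mul_of_nonneg_left inner_le hx
    _ ≤ M * (C + ηp * M) := mul_le_mul_of_nonneg_right hxM bound_nonneg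

end Revenue

section Reference

variable {t1 : ℕ} {p : ℕ → ℝ}

theorem armRef_sub_armRef (r r' : ℝ) (t : ℕ) :
    armRef t1 r' p t - armRef t1 r p t = t1 * (r' - r) / t := by
  unfold armRef; rw [div_sub_div_same]; ring

theorem armRef_monotone (t : ℕ) : Monotone (fun r => armRef t1 r p t) := by
  intro r r' h
  dsimp only [armRef]
  gcongr

theorem armRef_le {r M : ℝ} {t : ℕ} (hM : 0 ≤ M) (hr : r ≤ M) (hp : ∀ s ∈ Ico t1 t, p s ≤ M)
    (ht : t1 ≤ t) : armRef t1 r p t ≤ M := by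
  rcases t.eq_zero_or_pos with rfl | ht0
  -- `t = 0` forces `t1 = 0`, and the division by zero yields `0`
  · simpa [armRef] using hM
  have hsum : ∑ s ∈ Ico t1 t, p s ≤ ((t : ℝ) - t1) * M := by
    simpa [Nat.cast_sub ht] using sum_le_card_nsmul _ _ _ hp
  rw [armRef, div_le_iff₀ (by exact_mod_cast ht0)]
  linarith [mul_le_mul_of_nonneg_left hr (Nat.cast_nonneg (α := ℝ) t1)]

end Reference

def feasiblePrices (t1 T : ℕ) (pbar : ℝ) : Set (ℕ → ℝ) :=
  {p | ∀ t ∈ Icc t1 T, p t ∈ Set.Icc 0 pbar}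

theorem armVStar_eq_sSup_image (H : ℝ → ℝ) (ηp ηm : ℝ) (t1 T : ℕ) (pbar r : ℝ) :
    armVStar H ηp ηm t1 T pbar r = sSup (armV H ηp ηm t1 T r '' feasiblePrices t1 T pbar) := by
  simp only [armVStar, Set.image, feasiblePrices, eq_comm]
  rfl

section TotalRevenue

variable {H : ℝ → ℝ} {ηp ηm : ℝ} {t1 T : ℕ} {pbar : ℝ} {p : ℕ → ℝ}

theorem armV_monotone (hηp : 0 ≤ ηp) (hηm : 0 ≤ ηm) (hp : p ∈ feasiblePrices t1 T pbar) :
    Monotone (fun r => armV H ηp ηm t1 T r p) := fun _ _ h =>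
  sum_le_sum fun t ht => armRev_monotone hηp hηm (hp t ht).1 (armRef_monotone t h)

theorem armV_sub_armV_le (hηp : 0 ≤ ηp) (hηm : 0 ≤ ηm) (hp : p ∈ feasiblePrices t1 T pbar)
    {r r' : ℝ} (hrr' : r ≤ r') :
    armV H ηp ηm t1 T r' p - armV H ηp ηm t1 T r p ≤
      pbar * t1 * (r' - r) * (ηp + ηm) * ∑ t ∈ Icc t1 T, (1 : ℝ) / t := by
  rw [armV, armV, ← sum_sub_distrib, mul_sum]
  refine sum_le_sum fun t ht => ?_
  have ref_le := armRef_monotone (p := p) (t1 := t1) t hrr'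
  calc _ ≤ p t * ((ηp + ηm) * (armRef t1 r' p t - armRef t1 r p t)) :=
        armRev_sub_armRev_le hηp hηm (hp t ht).1 ref_le
    _ ≤ pbar * ((ηp + ηm) * (armRef t1 r' p t - armRef t1 r p t)) :=
        mul_le_mul_of_nonneg_right (hp t ht).2
          (mul_nonneg (add_nonneg hηp hηm) (sub_nonneg.2 ref_le))
    _ = _ := by rw [armRef_sub_armRef]; ring

theorem bddAbove_armV_image (hηp : 0 ≤ ηp) (hηm : 0 ≤ ηm) {C : ℝ}
    (hH : ∀ x ∈ Set.Icc 0 pbar, |H x| ≤ C) {r : ℝ} (hr : r ∈ Set.Icc 0 pbar) :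
    BddAbove (armV H ηp ηm t1 T r '' feasiblePrices t1 T pbar) := by
  refine ⟨#(Icc t1 T) * (pbar * (C + ηp * pbar)), ?_⟩
  rintro _ ⟨p, hp, rfl⟩
  rw [← nsmul_eq_mul]
  refine sum_le_card_nsmul _ _ _ fun t ht => ?_
  have earlier_le (s) (hs : s ∈ Ico t1 t) : p s ≤ pbar :=
    (hp s (mem_Icc.2 ⟨(mem_Ico.1 hs).1, (mem_Ico.1 hs).2.le.trans (mem_Icc.1 ht).2⟩)).2
  exact armRev_le hηp hηm (hp t ht).1 (hp t ht).2 (hH _ (hp t ht))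
    (armRef_le (hr.1.trans hr.2) hr.2 earlier_le (mem_Icc.1 ht).1)

end TotalRevenue

theorem optimal_revenue_gap_in_reference_general
    (pbar : ℝ) (H : ℝ → ℝ)
    (hH : ∃ C : ℝ, ∀ x ∈ Set.Icc (0 : ℝ) pbar, |H x| ≤ C)
    (ηp ηm : ℝ) (hηp : 0 ≤ ηp) (hηm : 0 ≤ ηm)
    (t1 T : ℕ) :
    ∀ r r' : ℝ, 0 ≤ r → r ≤ r' → r' ≤ pbar →
      armVStar H ηp ηm t1 T pbar r ≤ armVStar H ηp ηm t1 T pbar r' ∧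
      armVStar H ηp ηm t1 T pbar r' - armVStar H ηp ηm t1 T pbar r ≤
        pbar * (t1 : ℝ) * (r' - r) * (ηp + ηm) * ∑ t ∈ Finset.Icc t1 T, (1 : ℝ) / (t : ℝ) := by
  intro r r' hr hrr' hr'
  obtain ⟨C, hC⟩ := hH
  have hfeas : (feasiblePrices t1 T pbar).Nonempty :=
    ⟨0, fun _ _ => ⟨le_rfl, hr.trans (hrr'.trans hr')⟩⟩
  rw [armVStar_eq_sSup_image, armVStar_eq_sSup_image]
  constructor
  · simpa using csSup_image_le_csSup_image_add (B := 0) hfeas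
      (bddAbove_armV_image hηp hηm hC ⟨hr.trans hrr', hr'⟩)
      fun p hp => by simpa using armV_monotone hηp hηm hp hrr'
  · rw [sub_le_iff_le_add']
    exact csSup_image_le_csSup_image_add hfeas
      (bddAbove_armV_image hηp hηm hC ⟨hr, hrr'.trans hr'⟩)
      fun p hp => by linarith [armV_sub_armV_le (H := H) hηp hηm hp hrr']

/-- The optimal revenue `V*(·, t1)` is non-decreasing in the starting reference price and
satisfies the Lipschitz-type bound
`V*(r′,t1) − V*(r,t1) ≤ p̄·t1·(r′−r)·(η⁺+η⁻)·Σ_{t=t1}^{T} 1/t`. -/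
theorem optimal_revenue_gap_in_reference
    (pbar : ℝ) (hpbar : 0 < pbar) (H : ℝ → ℝ)
    (hH : ∃ C : ℝ, ∀ x ∈ Set.Icc (0 : ℝ) pbar, |H x| ≤ C)
    (ηp ηm : ℝ) (hηp : 0 ≤ ηp) (hηm : 0 ≤ ηm)
    (t1 T : ℕ) (ht1 : 1 ≤ t1) (hT : t1 ≤ T) :
    ∀ r r' : ℝ, 0 ≤ r → r ≤ r' → r' ≤ pbar →
      armVStar H ηp ηm t1 T pbar r ≤ armVStar H ηp ηm t1 T pbar r' ∧
      armVStar H ηp ηm t1 T pbar r' - armVStar H ηp ηm t1 T pbar r ≤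
        pbar * (t1 : ℝ) * (r' - r) * (ηp + ηm) * ∑ t ∈ Finset.Icc t1 T, (1 : ℝ) / (t : ℝ) :=
  optimal_revenue_gap_in_reference_general pbar H hH ηp ηm hηp hηm t1 T
end

section
/- Consider linear demand H(p) = b − a·p with a > 0 and symmetric reference effects η⁺ = η⁻ = η ≥ 0 (so the single-round revenue is p·(b − a·p + η·(r−p))). Fix 1 ≤ t1 ≤ T and a starting reference price r ∈ [0,p̄]. Suppose p* = (p*_t)_{t=t1}^{T} maximizes the total revenue V^p(r,t1) over [0,p̄]^{T−t1+1}, and suppose there exists t† ∈ {t1,…,T} such that p*_t = p̄ for t1 ≤ t < t† and 0 < p*_t < p̄ for t† ≤ t ≤ T. Then, with (r*_t) the induced ARM reference prices: (i) the terminal price satisfies p*_T = (b + η·r*_T)/(2(a+η)); and (ii) the markdown recursion p*_t = p*_{t+1} + η·r*_t/(2(a+η)(t+1) + η) holds for every t with t† ≤ t ≤ T−1. -/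
/-
Perturbing one price `p_t` (with `t₁ ≤ t ≤ T`) to `x` changes the total revenue by exactly
`(x - p_t) D_t - (a + η) (x - p_t)²`, because `p_t` enters each later reference price `r_s`
linearly with weight `1/s`. If `p_t` is interior, optimality makes `x = p_t` a local maximum of
this quadratic, so the first-order condition `D_t = 0` holds. At `t = T` nothing lies in the
future, which gives the terminal price; subtracting the conditions at `t` and `t + 1` and using
`(t + 1) r_{t+1} = t r_t + p_t` gives the markdown recursion.
-/

open Finset Function

lemma armRev_linear_symm (a b η x ρ : ℝ) :
    armRev (fun x => b - a * x) η η x ρ = x * (b - a * x) + η * x * (ρ - x) := by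
  unfold armRev
  rcases le_total x ρ with h | h
  · rw [max_eq_left (sub_nonneg.mpr h), max_eq_right (sub_nonpos.mpr h)]
    ring
  · rw [max_eq_right (sub_nonpos.mpr h), max_eq_left (sub_nonneg.mpr h)]
    ring

lemma sum_Icc_eq_sum_Ico_add_add_sum_Ioc {M : Type*} [AddCommMonoid M] (u : ℕ → M)
    {t1 t T : ℕ} (h1 : t1 ≤ t) (h2 : t ≤ T) :
    ∑ s ∈ Icc t1 T, u s = ∑ s ∈ Ico t1 t, u s + u t + ∑ s ∈ Ioc t T, u s := by
  rw [← Ico_add_one_right_eq_Icc, ← sum_Ico_consecutive u h1 (Nat.le_add_right_of_le h2),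
    Ico_add_one_right_eq_Icc, Icc_eq_cons_Ioc h2, sum_cons, add_assoc]

lemma sum_Ioc_eq_add_sum_Ioc_succ {M : Type*} [AddCommMonoid M] (u : ℕ → M) {t T : ℕ}
    (h : t + 1 ≤ T) : ∑ s ∈ Ioc t T, u s = u (t + 1) + ∑ s ∈ Ioc (t + 1) T, u s := by
  rw [← Icc_add_one_left_eq_Ioc, Icc_eq_cons_Ioc h, sum_cons]

section ReferencePrice

variable {t1 : ℕ} {r : ℝ} {p : ℕ → ℝ}

lemma natCast_mul_armRef {t : ℕ} (h : t1 ≤ t) :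
    (t : ℝ) * armRef t1 r p t = t1 * r + ∑ s ∈ Ico t1 t, p s := by
  rcases Nat.eq_zero_or_pos t with rfl | ht
  · obtain rfl : t1 = 0 := Nat.le_zero.mp h
    simp
  · exact mul_div_cancel₀ _ (by positivity)

lemma armRef_succ {t : ℕ} (h : t1 ≤ t) :
    ((t : ℝ) + 1) * armRef t1 r p (t + 1) = t * armRef t1 r p t + p t := by
  rw [natCast_mul_armRef h, ← Nat.cast_add_one, natCast_mul_armRef (Nat.le_succ_of_le h),
    sum_Ico_succ_top h, add_assoc]

lemma armRef_update_of_le {s t : ℕ} (h : s ≤ t) (x : ℝ) :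
    armRef t1 r (update p t x) s = armRef t1 r p s := by
  unfold armRef
  congr 2
  refine sum_congr rfl fun i hi => update_of_ne ?_ _ _
  exact ((mem_Ico.mp hi).2.trans_le h).ne

lemma armRef_update_of_lt {s t : ℕ} (ht : t1 ≤ t) (h : t < s) (x : ℝ) :
    armRef t1 r (update p t x) s = armRef t1 r p s + (x - p t) / s := by
  have hmem : t ∈ Ico t1 s := mem_Ico.mpr ⟨ht, h⟩
  unfold armRef
  rw [sum_update_of_mem hmem, ← erase_eq, sum_erase_eq_sub hmem]
  ring

end ReferencePrice

lemma eq_zero_of_forall_mem_Icc_mul_sub_sq_nonpos {lo hi x₀ D c : ℝ} (hx : x₀ ∈ Set.Ioo lo hi)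
    (h : ∀ x ∈ Set.Icc lo hi, (x - x₀) * D - c * (x - x₀) ^ 2 ≤ 0) : D = 0 := by
  have hmax : IsLocalMax (fun x => (x - x₀) * D - c * (x - x₀) ^ 2) x₀ := by
    filter_upwards [Icc_mem_nhds hx.1 hx.2] with x hx
    simpa using h x hx
  have hderiv : HasDerivAt (fun x => (x - x₀) * D - c * (x - x₀) ^ 2)
      (1 * D - c * (2 * (x₀ - x₀) ^ (2 - 1) * 1)) x₀ :=
    (((hasDerivAt_id' x₀).sub_const x₀).mul_const D).sub
      ((((hasDerivAt_id' x₀).sub_const x₀).pow 2).const_mul c)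
  simpa using hmax.hasDerivAt_eq_zero hderiv

/-- `D_t = ∂V/∂p_t` for linear demand and symmetric reference effects. -/
noncomputable def armMarginal (a b η : ℝ) (t1 T : ℕ) (r : ℝ) (p : ℕ → ℝ) (t : ℕ) : ℝ :=
  b + η * armRef t1 r p t + η * ∑ s ∈ Ioc t T, p s / s - 2 * (a + η) * p t

section Optimality

variable {a b η : ℝ} {t1 T : ℕ} {r : ℝ} {p : ℕ → ℝ}

lemma armV_update {t : ℕ} (ht1 : t1 ≤ t) (htT : t ≤ T) (x : ℝ) :
    armV (fun x => b - a * x) η η t1 T r (update p t x) =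
      armV (fun x => b - a * x) η η t1 T r p + (x - p t) * armMarginal a b η t1 T r p t
        - (a + η) * (x - p t) ^ 2 := by
  have hbefore : ∑ s ∈ Ico t1 t, armRev (fun x => b - a * x) η η (update p t x s)
        (armRef t1 r (update p t x) s) =
      ∑ s ∈ Ico t1 t, armRev (fun x => b - a * x) η η (p s) (armRef t1 r p s) := by
    refine sum_congr rfl fun s hs => ?_
    have hst : s < t := (mem_Ico.mp hs).2
    rw [update_of_ne hst.ne, armRef_update_of_le hst.le]
  have hafter : ∑ s ∈ Ioc t T, armRev (fun x => b - a * x) η η (update p t x s)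
        (armRef t1 r (update p t x) s) =
      ∑ s ∈ Ioc t T, armRev (fun x => b - a * x) η η (p s) (armRef t1 r p s)
        + η * (x - p t) * ∑ s ∈ Ioc t T, p s / s := by
    rw [mul_sum, ← sum_add_distrib]
    refine sum_congr rfl fun s hs => ?_
    have hts : t < s := (mem_Ioc.mp hs).1
    rw [update_of_ne hts.ne', armRef_update_of_lt ht1 hts, armRev_linear_symm,
      armRev_linear_symm]
    ring
  unfold armV
  rw [sum_Icc_eq_sum_Ico_add_add_sum_Ioc _ ht1 htT, sum_Icc_eq_sum_Ico_add_add_sum_Ioc _ ht1 htT,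
    hbefore, hafter, update_self, armRef_update_of_le le_rfl, armRev_linear_symm,
    armRev_linear_symm, armMarginal]
  ring

lemma armMarginal_eq_zero_of_isOptimal {pbar : ℝ}
    (hp : ∀ t ∈ Icc t1 T, p t ∈ Set.Icc 0 pbar)
    (hopt : ∀ q : ℕ → ℝ, (∀ t ∈ Icc t1 T, q t ∈ Set.Icc 0 pbar) →
      armV (fun x => b - a * x) η η t1 T r q ≤ armV (fun x => b - a * x) η η t1 T r p)
    {t : ℕ} (ht : t ∈ Icc t1 T) (hpt : p t ∈ Set.Ioo 0 pbar) :
    armMarginal a b η t1 T r p t = 0 := by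
  obtain ⟨ht1, htT⟩ := mem_Icc.mp ht
  refine eq_zero_of_forall_mem_Icc_mul_sub_sq_nonpos (c := a + η) hpt fun x hx => ?_
  have hfeasible : ∀ s ∈ Icc t1 T, update p t x s ∈ Set.Icc 0 pbar := by
    intro s hs
    rcases eq_or_ne s t with rfl | hst
    · simpa using hx
    · simpa [update_of_ne hst] using hp s hs
  have hle := hopt _ hfeasible
  rw [armV_update ht1 htT] at hle
  linarith

end Optimality

theorem optimal_markdown_structure_linear_general
    (pbar a b η : ℝ) (ha : 0 < a) (hη : 0 ≤ η)
    (t1 T : ℕ)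
    (r : ℝ)
    (p : ℕ → ℝ) (hp : ∀ t ∈ Finset.Icc t1 T, p t ∈ Set.Icc 0 pbar)
    (hopt : ∀ q : ℕ → ℝ, (∀ t ∈ Finset.Icc t1 T, q t ∈ Set.Icc 0 pbar) →
      armV (fun x => b - a * x) η η t1 T r q ≤ armV (fun x => b - a * x) η η t1 T r p)
    (tdag : ℕ) (htdag : tdag ∈ Finset.Icc t1 T)
    (hint : ∀ t, tdag ≤ t → t ≤ T → 0 < p t ∧ p t < pbar) :
    p T = (b + η * armRef t1 r p T) / (2 * (a + η)) ∧
    (∀ t, tdag ≤ t → t + 1 ≤ T →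
      p t = p (t + 1) + η * armRef t1 r p t / (2 * (a + η) * ((t : ℝ) + 1) + η)) := by
  obtain ⟨htd1, htdT⟩ := mem_Icc.mp htdag
  have foc : ∀ t, tdag ≤ t → t ≤ T → armMarginal a b η t1 T r p t = 0 := fun t htd htT =>
    armMarginal_eq_zero_of_isOptimal hp hopt (mem_Icc.mpr ⟨htd1.trans htd, htT⟩)
      (hint t htd htT)
  constructor
  · have hT := foc T htdT le_rfl
    rw [armMarginal, Ioc_self, sum_empty] at hT
    field_simp
    linarith
  · intro t htd htT1
    have ht := foc t htd (by omega)
    have hsucc := foc (t + 1) (by omega) htT1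
    rw [armMarginal, sum_Ioc_eq_add_sum_Ioc_succ _ htT1] at ht
    rw [armMarginal] at hsucc
    have href := armRef_succ (r := r) (p := p) (htd1.trans htd)
    push_cast at ht
    have hcancel : ((t : ℝ) + 1) * (p (t + 1) / ((t : ℝ) + 1)) = p (t + 1) :=
      mul_div_cancel₀ _ (by positivity)
    rw [← sub_eq_iff_eq_add', eq_div_iff (by positivity)]
    linear_combination (-((t : ℝ) + 1)) * ht + ((t : ℝ) + 1) * hsucc - η * href + η * hcancel

/-- Structure of the optimal policy for linear demand `H(p) = b − a·p` with symmetric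
reference effects `η⁺ = η⁻ = η`: if the optimal price sequence equals `p̄` before `t†`
and is interior from `t†` onwards, then the terminal price satisfies
`p_T = (b + η·r_T)/(2(a+η))` and the markdown recursion
`p_t = p_{t+1} + η·r_t/(2(a+η)(t+1) + η)` holds for `t† ≤ t ≤ T−1`. -/
theorem optimal_markdown_structure_linear
    (pbar a b η : ℝ) (hpbar : 0 < pbar) (ha : 0 < a) (hη : 0 ≤ η)
    (t1 T : ℕ) (ht1 : 1 ≤ t1) (hT : t1 ≤ T)
    (r : ℝ) (hr : r ∈ Set.Icc 0 pbar)
    (p : ℕ → ℝ) (hp : ∀ t ∈ Finset.Icc t1 T, p t ∈ Set.Icc 0 pbar)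
    (hopt : ∀ q : ℕ → ℝ, (∀ t ∈ Finset.Icc t1 T, q t ∈ Set.Icc 0 pbar) →
      armV (fun x => b - a * x) η η t1 T r q ≤ armV (fun x => b - a * x) η η t1 T r p)
    (tdag : ℕ) (htdag : tdag ∈ Finset.Icc t1 T)
    (hhigh : ∀ t, t1 ≤ t → t < tdag → p t = pbar)
    (hint : ∀ t, tdag ≤ t → t ≤ T → 0 < p t ∧ p t < pbar) :
    p T = (b + η * armRef t1 r p T) / (2 * (a + η)) ∧
    (∀ t, tdag ≤ t → t + 1 ≤ T →
      p t = p (t + 1) + η * armRef t1 r p t / (2 * (a + η) * ((t : ℝ) + 1) + η)) :=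
  optimal_markdown_structure_linear_general pbar a b η ha hη t1 T r p hp hopt tdag htdag hint
end
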